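/- arXiv:math/0605694 — 2 statements merged into one kernel-verified Lean document; each statement's English description precedes it below -/
import Mathlib

section
/- Let R₁ → X₁ ⇉ X₀ be an S¹-central extension of Lie groupoids. For a principal S¹-bundle L → X₀ over the groupoid X₁ ⇉ X₀ (i.e., with a compatible X₁-action), the associated central extension (s*L ×_{X₁} t*L̄)/S¹ is trivial as a central extension; conversely, if for an S¹-bundle L → X₀ the central extension (s*L ×_{X₁} t*L̄)/S¹ admits a groupoid-homomorphism section of its projection to X₁, then L carries an action of X₁ ⇉ X₀ making it an S¹-bundle over the groupoid. -/
/-!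
STATEMENT 6. Exactness at `H¹(X₀, S¹)`: for a principal `S¹`-bundle
`L → X₀`, the central extension `τ₂(L) = (s*L ×_{X₁} t*L̄)/S¹` of `X₁ ⇉ X₀` is
trivial (admits a multiplicative section) precisely when `L` carries an
`X₁`-action making it an `S¹`-bundle over the groupoid.  Smooth structure is
abstracted away; `S¹` is Mathlib's `Circle`.
-/

/-- A (Lie) groupoid with arrows `X₁` over objects `X₀`.  Smooth structure is
abstracted away; only the algebraic structure is retained. -/
structure PreGroupoid (X₁ : Type*) (X₀ : Type*) where
  s : X₁ → X₀
  t : X₁ → X₀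
  e : X₀ → X₁
  inv : X₁ → X₁
  m : (x y : X₁) → t x = s y → X₁
  s_e : ∀ u, s (e u) = u
  t_e : ∀ u, t (e u) = u
  s_m : ∀ x y h, s (m x y h) = s x
  t_m : ∀ x y h, t (m x y h) = t y
  s_inv : ∀ x, s (inv x) = t x
  t_inv : ∀ x, t (inv x) = s x
  m_assoc : ∀ x y z h₁ h₂ h₃ h₄, m (m x y h₁) z h₂ = m x (m y z h₃) h₄
  e_m : ∀ x h, m (e (s x)) x h = x
  m_e : ∀ x h, m x (e (t x)) h = x
  m_inv : ∀ x h, m x (inv x) h = e (s x)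
  inv_m : ∀ x h, m (inv x) x h = e (t x)

/-- A (right) action of a groupoid `G` on a set `P` along an anchor map `a`. -/
structure GroupoidAction {X₁ X₀ : Type*} (G : PreGroupoid X₁ X₀) (P : Type*) where
  a : P → X₀
  act : (p : P) → (γ : X₁) → a p = G.s γ → P
  a_act : ∀ p γ h, a (act p γ h) = G.t γ
  act_e : ∀ p h, act p (G.e (a p)) h = p
  act_m : ∀ p γ δ h₁ h₂ h₃ h₄, act (act p γ h₁) δ h₂ = act p (G.m γ δ h₃) h₄

/-- A `G`-torsor over `S`: a surjection `π : P → S` with a `G`-action which is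
simply transitive on the fibres of `π`. -/
structure GroupoidTorsor {X₁ X₀ : Type*} (G : PreGroupoid X₁ X₀) (P : Type*) (S : Type*)
    extends GroupoidAction G P where
  π : P → S
  π_surj : Function.Surjective π
  π_act : ∀ p γ h, π (act p γ h) = π p
  exists_act : ∀ p p', π p = π p' → ∃ γ h, act p γ h = p'
  act_free : ∀ p γ γ' h h', act p γ h = act p γ' h' → γ = γ'

namespace Stmt6

variable {X₁ X₀ L : Type*} (GX : PreGroupoid X₁ X₀)
  (aL : L → X₀) (smulL : Circle → L → L)

/-- The fibre product `s*L ×_{X₁} t*L̄`: triples `(x, l, l')` with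
`l` over `s x` and `l'` over `t x`. -/
def FP : Type _ :=
  {p : X₁ × L × L // aL p.2.1 = GX.s p.1 ∧ aL p.2.2 = GX.t p.1}

/-- The (anti)diagonal `S¹`-relation on `s*L ×_{X₁} t*L̄` (recall the second
copy carries the inverted action, so the anti-diagonal action is `z` on both
legs). -/
def diag : FP GX aL → FP GX aL → Prop := fun a b =>
  ∃ z : Circle, b.val = (a.val.1, smulL z a.val.2.1, smulL z a.val.2.2)

/-- The central extension `τ₂(L) = (s*L ×_{X₁} t*L̄)/S¹`. -/
def E : Type _ := Quot (diag GX aL smulL)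

/-- The projection `τ₂(L) → X₁`. -/
def projE : E GX aL smulL → X₁ :=
  Quot.lift (fun a => a.val.1) (by rintro a b ⟨z, h⟩; show (a.val).1 = (b.val).1; rw [h])

/-- `IsMulE c₁ c₂ c₃` expresses that `c₃` is the product of `c₁` and `c₂` for
the groupoid structure of the central extension `τ₂(L)`:  on representatives
with matching middle leg, `[x,l,l'] · [y,l',m'] = [xy,l,m']`. -/
def IsMulE (c₁ c₂ c₃ : E GX aL smulL) : Prop :=
  ∃ (x y : X₁) (h : GX.t x = GX.s y) (l l' m' : L)
    (h₁ : aL l = GX.s x) (h₂ : aL l' = GX.t x)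
    (h₃ : aL l' = GX.s y) (h₄ : aL m' = GX.t y)
    (h₅ : aL l = GX.s (GX.m x y h)) (h₆ : aL m' = GX.t (GX.m x y h)),
    c₁ = Quot.mk _ ⟨(x, l, l'), h₁, h₂⟩ ∧
    c₂ = Quot.mk _ ⟨(y, l', m'), h₃, h₄⟩ ∧
    c₃ = Quot.mk _ ⟨(GX.m x y h, l, m'), h₅, h₆⟩

/-!
A multiplicative section `σ` of `τ₂(L)` and an `X₁`-action on `L` determine each other. Given
the action, put `σ x = [x, l, x • l]` for any `l` over `s x`; the class does not depend on `l`
because the action commutes with `S¹`. Given `σ`, principality of `L` makes the class `σ x`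
have exactly one representative `(x, l, l')` for each `l` over `s x`, and `x • l := l'`.
Multiplicativity of `σ` is then the composition law, and the unit law follows from it since
each arrow acts injectively.
-/

theorem _root_.PreGroupoid.m_e_e (u : X₀) (h : GX.t (GX.e u) = GX.s (GX.e u)) :
    GX.m (GX.e u) (GX.e u) h = GX.e u := by
  have unit_mul := GX.e_m (GX.e u) (by rw [GX.t_e, GX.s_e])
  simpa only [GX.s_e] using unit_mul

structure IsPrincipalBundle : Prop where
  one_smul : ∀ l, smulL 1 l = l
  mul_smul : ∀ z w l, smulL z (smulL w l) = smulL (z * w) l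
  anchor_smul : ∀ z l, aL (smulL z l) = aL l
  principal : ∀ l l', aL l = aL l' → ∃! z : Circle, smulL z l = l'

namespace IsPrincipalBundle

variable {aL smulL}

theorem exists_smul_eq (hL : IsPrincipalBundle aL smulL) {l l' : L} (h : aL l = aL l') :
    ∃ z, smulL z l = l' :=
  (hL.principal l l' h).exists

theorem smul_left_cancel (hL : IsPrincipalBundle aL smulL) {z w : Circle} {l : L}
    (h : smulL z l = smulL w l) : z = w :=
  (hL.principal l (smulL w l) (hL.anchor_smul w l).symm).unique h rfl

theorem eq_one_of_smul_eq_self (hL : IsPrincipalBundle aL smulL) {z : Circle} {l : L}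
    (h : smulL z l = l) : z = 1 :=
  hL.smul_left_cancel (h.trans (hL.one_smul l).symm)

end IsPrincipalBundle

section

variable {GX aL smulL}

abbrev E.mk (x : X₁) (l l' : L) (h : aL l = GX.s x) (h' : aL l' = GX.t x) : E GX aL smulL :=
  Quot.mk _ ⟨(x, l, l'), h, h'⟩

theorem diag_equivalence (hL : IsPrincipalBundle aL smulL) : Equivalence (diag GX aL smulL) where
  refl a := ⟨1, by simp only [hL.one_smul]⟩
  symm := by
    rintro a b ⟨z, hz⟩
    exact ⟨z⁻¹, by simp only [hz, hL.mul_smul, inv_mul_cancel, hL.one_smul]⟩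
  trans := by
    rintro a b c ⟨z, hz⟩ ⟨w, hw⟩
    exact ⟨w * z, by simp only [hw, hz, hL.mul_smul]⟩

theorem E.mk_eq_mk_iff (hL : IsPrincipalBundle aL smulL) {x : X₁} {l l' m m' : L}
    {h₁ : aL l = GX.s x} {h₂ : aL l' = GX.t x} {h₃ : aL m = GX.s x} {h₄ : aL m' = GX.t x} :
    (E.mk x l l' h₁ h₂ : E GX aL smulL) = E.mk x m m' h₃ h₄ ↔
      ∃ z, m = smulL z l ∧ m' = smulL z l' := by
  refine Quot.eq.trans ((diag_equivalence hL).eqvGen_iff.trans ?_)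
  simp only [diag, Prod.ext_iff, true_and]

theorem E.mk_eq_mk_of_smul (z : Circle) {x : X₁} {l l' m m' : L} (hm : m = smulL z l)
    (hm' : m' = smulL z l') (h₁ : aL l = GX.s x) (h₂ : aL l' = GX.t x) (h₃ : aL m = GX.s x)
    (h₄ : aL m' = GX.t x) : (E.mk x l l' h₁ h₂ : E GX aL smulL) = E.mk x m m' h₃ h₄ := by
  subst hm hm'
  exact Quot.sound ⟨z, rfl⟩

theorem E.mk_inj_left (hL : IsPrincipalBundle aL smulL) {x : X₁} {l l' l'' : L}
    {h₁ : aL l = GX.s x} {h₂ : aL l' = GX.t x} {h₃ : aL l'' = GX.t x} :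
    (E.mk x l l' h₁ h₂ : E GX aL smulL) = E.mk x l l'' h₁ h₃ ↔ l' = l'' := by
  refine ⟨fun h => ?_, fun h => by subst h; rfl⟩
  obtain ⟨z, hl, rfl⟩ := (E.mk_eq_mk_iff hL).1 h
  rw [hL.eq_one_of_smul_eq_self hl.symm, hL.one_smul]

theorem E.exists_mk_eq (hL : IsPrincipalBundle aL smulL) (c : E GX aL smulL) {x : X₁}
    (hc : projE GX aL smulL c = x) {l : L} (hl : aL l = GX.s x) :
    ∃ l' h', c = E.mk x l l' hl h' := by
  induction c using Quot.ind with
  | mk a =>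
    obtain ⟨⟨x₀, a, b⟩, ha, hb⟩ := a
    obtain rfl : x₀ = x := hc
    obtain ⟨z, rfl⟩ := hL.exists_smul_eq (ha.trans hl.symm)
    exact ⟨smulL z b, (hL.anchor_smul z b).trans hb, E.mk_eq_mk_of_smul z rfl rfl ha hb _ _⟩

theorem IsMulE.eq_mk (hL : IsPrincipalBundle aL smulL) {c₁ c₂ c₃ : E GX aL smulL}
    (hmul : IsMulE GX aL smulL c₁ c₂ c₃) {x y : X₁} (h : GX.t x = GX.s y) {l l' l'' : L}
    {h₁ : aL l = GX.s x} {h₂ : aL l' = GX.t x} {h₃ : aL l' = GX.s y} {h₄ : aL l'' = GX.t y}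
    (hc₁ : c₁ = E.mk x l l' h₁ h₂) (hc₂ : c₂ = E.mk y l' l'' h₃ h₄)
    (h₅ : aL l = GX.s (GX.m x y h)) (h₆ : aL l'' = GX.t (GX.m x y h)) :
    c₃ = E.mk (GX.m x y h) l l'' h₅ h₆ := by
  obtain ⟨x₀, y₀, h₀, a, b, c, p₁, p₂, p₃, p₄, p₅, p₆, e₁, e₂, rfl⟩ := hmul
  subst e₁ e₂
  obtain rfl : x₀ = x := congrArg (projE GX aL smulL) hc₁
  obtain rfl : y₀ = y := congrArg (projE GX aL smulL) hc₂
  obtain ⟨v, ha, hb⟩ := (E.mk_eq_mk_iff hL (h₃ := p₁) (h₄ := p₂)).1 hc₁.symm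
  obtain ⟨w, hb', hc⟩ := (E.mk_eq_mk_iff hL (h₃ := p₃) (h₄ := p₄)).1 hc₂.symm
  obtain rfl : v = w := hL.smul_left_cancel (hb.symm.trans hb')
  exact (E.mk_eq_mk_of_smul v ha hc h₅ h₆ p₅ p₆).symm

theorem E.mk_act_eq_mk_of_act_eq (hL : IsPrincipalBundle aL smulL)
    (lact : (x : X₁) → (l : L) → aL l = GX.s x → L) (hA : ∀ x l h, aL (lact x l h) = GX.t x)
    (hS : ∀ z x l h h', lact x (smulL z l) h' = smulL z (lact x l h)) {x : X₁} {l l' l'' : L}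
    (h : aL l = GX.s x) (h' : aL l' = GX.s x) (h'' : aL l'' = GX.t x) (hl'' : lact x l' h' = l'') :
    (E.mk x l (lact x l h) h (hA x l h) : E GX aL smulL) = E.mk x l' l'' h' h'' := by
  subst hl''
  obtain ⟨z, rfl⟩ := hL.exists_smul_eq (h.trans h'.symm)
  exact E.mk_eq_mk_of_smul z rfl (hS z x l h h') _ _ _ _

theorem exists_isMulE_section_of_action (hL : IsPrincipalBundle aL smulL)
    (aL_surj : Function.Surjective aL) (lact : (x : X₁) → (l : L) → aL l = GX.s x → L)
    (hA : ∀ x l h, aL (lact x l h) = GX.t x)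
    (hM : ∀ x y l h₁ h₂ h₃ h₄, lact y (lact x l h₁) h₂ = lact (GX.m x y h₃) l h₄)
    (hS : ∀ z x l h h', lact x (smulL z l) h' = smulL z (lact x l h)) :
    ∃ σ : X₁ → E GX aL smulL, (∀ r, projE GX aL smulL (σ r) = r) ∧
      ∀ x y h, IsMulE GX aL smulL (σ x) (σ y) (σ (GX.m x y h)) := by
  choose ℓ hℓ using aL_surj
  refine ⟨fun x => E.mk x (ℓ (GX.s x)) (lact x _ (hℓ _)) (hℓ _) (hA _ _ _), fun _ => rfl,
    fun x y h => ?_⟩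
  have hxy : aL (ℓ (GX.s x)) = GX.s (GX.m x y h) := by rw [hℓ, GX.s_m]
  have hx : aL (lact x (ℓ (GX.s x)) (hℓ _)) = GX.s y := (hA _ _ _).trans h
  have hyx : aL (lact y _ hx) = GX.t (GX.m x y h) := by rw [hA, GX.t_m]
  exact ⟨x, y, h, _, _, _, hℓ _, hA _ _ _, hx, hA _ _ _, hxy, hyx, rfl,
    E.mk_act_eq_mk_of_act_eq hL lact hA hS _ hx (hA _ _ _) rfl,
    E.mk_act_eq_mk_of_act_eq hL lact hA hS _ hxy hyx (hM _ _ _ _ _ _ hxy).symm⟩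

theorem exists_action_of_isMulE_section (hL : IsPrincipalBundle aL smulL)
    (σ : X₁ → E GX aL smulL) (hsec : ∀ r, projE GX aL smulL (σ r) = r)
    (hmul : ∀ x y h, IsMulE GX aL smulL (σ x) (σ y) (σ (GX.m x y h))) :
    ∃ lact : (x : X₁) → (l : L) → aL l = GX.s x → L,
      (∀ x l h, aL (lact x l h) = GX.t x) ∧
      (∀ l h, lact (GX.e (aL l)) l h = l) ∧
      (∀ x y l h₁ h₂ h₃ h₄, lact y (lact x l h₁) h₂ = lact (GX.m x y h₃) l h₄) ∧
      (∀ z x l h h', lact x (smulL z l) h' = smulL z (lact x l h)) := by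
  choose lact hA hlact using fun x l (h : aL l = GX.s x) => E.exists_mk_eq hL (σ x) (hsec x) h
  have act_eq {x l l'} (h h') (hσ : σ x = E.mk x l l' h h') : lact x l h = l' :=
    (E.mk_inj_left hL).1 ((hlact x l h).symm.trans hσ)
  have act_comp : ∀ x y l h₁ h₂ h₃ h₄,
      lact y (lact x l h₁) h₂ = lact (GX.m x y h₃) l h₄ := fun x y l h₁ h₂ h₃ h₄ =>
    (act_eq h₄ _ ((hmul x y h₃).eq_mk hL h₃ (hlact x l h₁) (hlact y _ h₂) h₄
      (by rw [hA, GX.t_m]))).symm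
  have act_injective {x l l''} (h h'') (hl : lact x l h = lact x l'' h'') : l = l'' := by
    obtain ⟨z, rfl, hz⟩ := (E.mk_eq_mk_iff hL).1 ((hlact x l h).symm.trans (hlact x l'' h''))
    rw [hL.eq_one_of_smul_eq_self (hl.trans hz).symm, hL.one_smul]
  refine ⟨lact, hA, fun l h => ?_, act_comp,
    fun z x l h h' => act_eq h' ((hL.anchor_smul _ _).trans (hA x l h))
      ((hlact x l h).trans (E.mk_eq_mk_of_smul z rfl rfl _ _ _ _))⟩
  have h' : aL (lact _ l h) = GX.s (GX.e (aL l)) := by rw [hA, GX.t_e, GX.s_e]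
  refine act_injective h' h ((act_comp _ _ l h h' (by rw [GX.t_e, GX.s_e]) ?_).trans ?_)
  · rwa [GX.m_e_e]
  · simp only [GX.m_e_e]

end

/-- Let `L → X₀` be a principal `S¹`-bundle.  The associated
central extension `τ₂(L) = (s*L ×_{X₁} t*L̄)/S¹ → X₁ ⇉ X₀` admits a section
which is a groupoid homomorphism (i.e. is trivial as a central extension) if
and only if `L` carries a left `X₁`-action, compatible with the `S¹`-action,
making it an `S¹`-bundle over the groupoid `X₁ ⇉ X₀`. -/
theorem trivial_iff_action
    (one_smulL : ∀ l, smulL 1 l = l)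
    (mul_smulL : ∀ z w l, smulL z (smulL w l) = smulL (z * w) l)
    (aL_smulL : ∀ z l, aL (smulL z l) = aL l)
    (aL_surj : Function.Surjective aL)
    (principalL : ∀ l l', aL l = aL l' → ∃! z : Circle, smulL z l = l') :
    (∃ lactL : (x : X₁) → (l : L) → aL l = GX.s x → L,
        (∀ x l h, aL (lactL x l h) = GX.t x) ∧
        (∀ l h, lactL (GX.e (aL l)) l h = l) ∧
        (∀ x y l h₁ h₂ h₃ h₄, lactL y (lactL x l h₁) h₂ = lactL (GX.m x y h₃) l h₄) ∧
        (∀ z x l h h', lactL x (smulL z l) h' = smulL z (lactL x l h)))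
    ↔
    (∃ σ : X₁ → E GX aL smulL,
        (∀ r, projE GX aL smulL (σ r) = r) ∧
        (∀ x y h, IsMulE GX aL smulL (σ x) (σ y) (σ (GX.m x y h)))) := by
  have hL : IsPrincipalBundle aL smulL := ⟨one_smulL, mul_smulL, aL_smulL, principalL⟩
  constructor
  · rintro ⟨lact, hA, -, hM, hS⟩
    exact exists_isMulE_section_of_action hL aL_surj lact hA hM hS
  · rintro ⟨σ, hsec, hmul⟩
    exact exists_action_of_isMulE_section hL σ hsec hmul

end Stmt6
end

section
/- Let η ∈ Ω¹(X₂) satisfy ∂η = 0 for a Lie groupoid X₁ ⇉ X₀ with Lie algebroid A. Define the t-fiberwise 1-form λ^r on X₁ by λ^r(δ_x) = η(r_{x⁻¹*}δ_x, 0_x) and the s-fiberwise 1-form λ^l by λ^l(δ_x) = η(0_x, l_{x⁻¹*}δ_x). Then for every section V of A: (i) η(V⃗(x), 0_y) = λ^r(V⃗(xy)) − λ^r(V⃗(x)) for all composable (x,y); (ii) η(0_x, V⃖(y)) = λ^l(V⃖(xy)) − λ^l(V⃖(y)); (iii) λ^r(V⃗)(u) = λ^l(V⃖)(u) = 0 for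 all units u; (iv) η(V⃗(x), −V⃖(x⁻¹)) = λ^l(V⃖)(x⁻¹) − λ^r(V⃗)(x) for all x ∈ X₁. -/
namespace GroupoidTangent

variable {X₁ X₀ : Type*} (G : PreGroupoid X₁ X₀)
variable {T : X₁ → Type*} [∀ x, AddCommGroup (T x)] [∀ x, Module ℝ (T x)]

/-- Given a 1-form `η ∈ Ω¹(X₂)`, modelled as an additive pairing on compatible
tangent pairs, the `t`-fiberwise 1-form `λ^r` on `X₁`,
`λ^r(δ_x) = η(r_{x⁻¹*}δ_x, 0_x)`, evaluated on the right-invariant vector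
field `V⃗` of a section `V` of the Lie algebroid: since
`r_{x⁻¹*}(V⃗(x)) = V⃗(1_{s x})`, this is `η` at the point `(1_{s x}, x) ∈ X₂`
on the pair `(V⃗(1_{s x}), 0_x)`. -/
def lamr (η : ∀ x y, G.t x = G.s y → T x → T y → ℝ)
    {VF : Type*} (Rvec : VF → ∀ x, T x) (V : VF) (x : X₁) : ℝ :=
  η (G.e (G.s x)) x (G.t_e (G.s x)) (Rvec V (G.e (G.s x))) 0

/-- The `s`-fiberwise 1-form `λ^l`, `λ^l(δ_x) = η(0_x, l_{x⁻¹*}δ_x)`,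
evaluated on the left-invariant vector field `V⃖` of `V`. -/
def laml (η : ∀ x y, G.t x = G.s y → T x → T y → ℝ)
    {VF : Type*} (Lvec : VF → ∀ x, T x) (V : VF) (x : X₁) : ℝ :=
  η x (G.e (G.t x)) ((G.s_e (G.t x)).symm) 0 (Lvec V (G.e (G.t x)))

end GroupoidTangent

open GroupoidTangent

/-!
Each identity is an instance of `∂η = 0` on a 3-simplex with a unit arrow: evaluating it at
`(1_{s x}, x, y)` on `(V⃗, 0, 0)` gives (i), since right invariance turns `dm` of `V⃗` into `V⃗`.
The left-handed identities are the right-handed ones for the opposite groupoid, (iii) is (i) at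
a pair of units, and (iv) follows by splitting `η(V⃗, -V⃖)` by additivity into (i) and (ii) at
`(x, x⁻¹)` and using (iii) at `x x⁻¹ = 1_{s x}`.
-/

section AdditivePairing

variable {A B R : Type*} [AddCommGroup A] [AddCommGroup B] [AddCommGroup R] {f : A → B → R}

def AddMonoidHom.uncurryOfAdditive (f : A → B → R)
    (hf : ∀ u u' v v', f (u + u') (v + v') = f u v + f u' v') : A × B →+ R :=
  AddMonoidHom.mk' (fun p => f p.1 p.2) fun _ _ => hf _ _ _ _

theorem map_zero_zero_of_additive (hf : ∀ u u' v v', f (u + u') (v + v') = f u v + f u' v') :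
    f 0 0 = 0 :=
  (AddMonoidHom.uncurryOfAdditive f hf).map_zero

theorem map_neg_right_of_additive (hf : ∀ u u' v v', f (u + u') (v + v') = f u v + f u' v')
    (u : A) (v : B) : f u (-v) = f u 0 - f 0 v := by
  have hsub := (AddMonoidHom.uncurryOfAdditive f hf).map_sub (u, 0) (0, v)
  rwa [Prod.mk_sub_mk, sub_zero, zero_sub] at hsub

end AdditivePairing

namespace PreGroupoid

variable {X₁ X₀ : Type*} (G : PreGroupoid X₁ X₀)

def op : PreGroupoid X₁ X₀ where
  s := G.t
  t := G.s
  e := G.e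
  inv := G.inv
  m x y h := G.m y x h.symm
  s_e := G.t_e
  t_e := G.s_e
  s_m x y h := G.t_m y x h.symm
  t_m x y h := G.s_m y x h.symm
  s_inv := G.t_inv
  t_inv := G.s_inv
  m_assoc _ _ _ _ _ _ _ := (G.m_assoc _ _ _ _ _ _ _).symm
  e_m x h := G.m_e x h.symm
  m_e x h := G.e_m x h.symm
  m_inv x h := G.inv_m x h.symm
  inv_m x h := G.m_inv x h.symm

theorem congr_composable {α : Sort*} (F : ∀ x y, G.t x = G.s y → α) {x x' y y' : X₁}
    (hx : x = x') (hy : y = y') (h : G.t x = G.s y) (h' : G.t x' = G.s y') :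
    F x y h = F x' y' h' := by
  subst hx hy
  rfl

theorem m_e_e_s11 (u : X₀) (h : G.t (G.e u) = G.s (G.e u)) : G.m (G.e u) (G.e u) h = G.e u :=
  (G.congr_composable G.m (congrArg G.e (G.s_e u).symm) rfl h (G.t_e _)).trans (G.e_m _ _)

end PreGroupoid

namespace GroupoidTangent

variable {X₁ X₀ : Type*} {G : PreGroupoid X₁ X₀}
  {T : X₁ → Type*}
  {dm : ∀ x y (h : G.t x = G.s y), T x → T y → T (G.m x y h)}
  {η : ∀ x y, G.t x = G.s y → T x → T y → ℝ} {VF : Type*} {Rvec Lvec : VF → ∀ x, T x}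

variable (G) in
def IsSimplicialCocycle (dm : ∀ x y (h : G.t x = G.s y), T x → T y → T (G.m x y h))
    (η : ∀ x y, G.t x = G.s y → T x → T y → ℝ) : Prop :=
  ∀ a x y (h₁ : G.t a = G.s x) (h₂ : G.t x = G.s y)
    (h₃ : G.t (G.m a x h₁) = G.s y) (h₄ : G.t a = G.s (G.m x y h₂))
    (α : T a) (ξ : T x) (υ : T y),
    η x y h₂ ξ υ - η (G.m a x h₁) y h₃ (dm a x h₁ α ξ) υ
      + η a (G.m x y h₂) h₄ α (dm x y h₂ ξ υ) - η a x h₁ α ξ = 0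

theorem IsSimplicialCocycle.op (hη : IsSimplicialCocycle G dm η) :
    IsSimplicialCocycle G.op (fun x y h u v => dm y x h.symm v u)
      (fun x y h u v => η y x h.symm v u) := by
  intro a x y h₁ h₂ h₃ h₄ α ξ υ
  dsimp only [PreGroupoid.op]
  linarith [hη y x a h₂.symm h₁.symm h₄.symm h₃.symm υ ξ α]

variable [∀ x, AddCommGroup (T x)]

theorem eta_rvec_zero_eq_lamr_sub (hzero : ∀ x y h, η x y h 0 0 = 0)
    (hR : ∀ V x y h, dm x y h (Rvec V x) 0 = Rvec V (G.m x y h))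
    (hdm : ∀ x y h, dm x y h 0 0 = 0) (hη : IsSimplicialCocycle G dm η)
    (V : VF) (x y : X₁) (h : G.t x = G.s y) :
    η x y h (Rvec V x) 0 = lamr G η Rvec V (G.m x y h) - lamr G η Rvec V x := by
  have h₁ : G.t (G.e (G.s x)) = G.s x := G.t_e _
  have key := hη _ x y h₁ h ((G.t_m _ x h₁).trans h) (h₁.trans (G.s_m x y h).symm)
    (Rvec V _) 0 0
  rw [hR, hdm, hzero] at key
  have unit_mul : η (G.m _ x h₁) y ((G.t_m _ x h₁).trans h) (Rvec V (G.m _ x h₁)) 0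
      = η x y h (Rvec V x) 0 :=
    G.congr_composable (fun a z h => η a z h (Rvec V a) 0) (G.e_m x h₁) rfl _ _
  have lamr_mul : η _ (G.m x y h) (h₁.trans (G.s_m x y h).symm) (Rvec V _) 0
      = lamr G η Rvec V (G.m x y h) :=
    G.congr_composable (fun a z h => η a z h (Rvec V a) 0)
      (congrArg G.e (G.s_m x y h).symm) rfl _ _
  have lamr_x : η _ x h₁ (Rvec V _) 0 = lamr G η Rvec V x := rfl
  rw [unit_mul, lamr_mul, lamr_x] at key
  linarith

theorem eta_zero_lvec_eq_laml_sub (hzero : ∀ x y h, η x y h 0 0 = 0)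
    (hL : ∀ V x y h, dm x y h 0 (Lvec V y) = Lvec V (G.m x y h))
    (hdm : ∀ x y h, dm x y h 0 0 = 0) (hη : IsSimplicialCocycle G dm η)
    (V : VF) (x y : X₁) (h : G.t x = G.s y) :
    η x y h 0 (Lvec V y) = laml G η Lvec V (G.m x y h) - laml G η Lvec V y :=
  eta_rvec_zero_eq_lamr_sub (G := G.op) (Rvec := Lvec) (fun x y h => hzero y x h.symm)
    (fun V x y h => hL V y x h.symm) (fun x y h => hdm y x h.symm) hη.op V y x h.symm

theorem lamr_e_eq_zero (hzero : ∀ x y h, η x y h 0 0 = 0)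
    (hR : ∀ V x y h, dm x y h (Rvec V x) 0 = Rvec V (G.m x y h))
    (hdm : ∀ x y h, dm x y h 0 0 = 0) (hη : IsSimplicialCocycle G dm η)
    (V : VF) (u : X₀) : lamr G η Rvec V (G.e u) = 0 := by
  have hu : G.t (G.e u) = G.s (G.e u) := (G.t_e u).trans (G.s_e u).symm
  have key := eta_rvec_zero_eq_lamr_sub hzero hR hdm hη V _ _ hu
  rw [G.m_e_e_s11] at key
  have lamr_unit : η (G.e u) (G.e u) hu (Rvec V (G.e u)) 0 = lamr G η Rvec V (G.e u) :=
    G.congr_composable (fun a z h => η a z h (Rvec V a) 0) (congrArg G.e (G.s_e u).symm) rfl _ _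
  linarith

theorem laml_e_eq_zero (hzero : ∀ x y h, η x y h 0 0 = 0)
    (hL : ∀ V x y h, dm x y h 0 (Lvec V y) = Lvec V (G.m x y h))
    (hdm : ∀ x y h, dm x y h 0 0 = 0) (hη : IsSimplicialCocycle G dm η)
    (V : VF) (u : X₀) : laml G η Lvec V (G.e u) = 0 :=
  lamr_e_eq_zero (G := G.op) (Rvec := Lvec) (fun x y h => hzero y x h.symm)
    (fun V x y h => hL V y x h.symm) (fun x y h => hdm y x h.symm) hη.op V u

theorem eta_rvec_neg_lvec_inv
    (hadd : ∀ x y h u u' v v', η x y h (u + u') (v + v') = η x y h u v + η x y h u' v')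
    (hR : ∀ V x y h, dm x y h (Rvec V x) 0 = Rvec V (G.m x y h))
    (hL : ∀ V x y h, dm x y h 0 (Lvec V y) = Lvec V (G.m x y h))
    (hdm : ∀ x y h, dm x y h 0 0 = 0) (hη : IsSimplicialCocycle G dm η)
    (V : VF) (x : X₁) (h : G.t x = G.s (G.inv x)) :
    η x (G.inv x) h (Rvec V x) (-(Lvec V (G.inv x)))
      = laml G η Lvec V (G.inv x) - lamr G η Rvec V x := by
  have hzero x y h := map_zero_zero_of_additive (hadd x y h)
  have right := eta_rvec_zero_eq_lamr_sub hzero hR hdm hη V x _ h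
  have left := eta_zero_lvec_eq_laml_sub hzero hL hdm hη V x _ h
  rw [G.m_inv, lamr_e_eq_zero hzero hR hdm hη] at right
  rw [G.m_inv, laml_e_eq_zero hzero hL hdm hη] at left
  rw [map_neg_right_of_additive (hadd _ _ h), right, left]
  ring

end GroupoidTangent

/-- Let `η ∈ Ω¹(X₂)` with `∂η = 0`.  With `λ^r, λ^l` as
above, for every section `V` of the Lie algebroid `A`:
(i)   `η(V⃗(x), 0_y) = λ^r(V⃗)(xy) − λ^r(V⃗)(x)` for composable `(x, y)`;
(ii)  `η(0_x, V⃖(y)) = λ^l(V⃖)(xy) − λ^l(V⃖)(y)`;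
(iii) `λ^r(V⃗)(u) = λ^l(V⃖)(u) = 0` at units `u`;
(iv)  `η(V⃗(x), −V⃖(x⁻¹)) = λ^l(V⃖)(x⁻¹) − λ^r(V⃗)(x)` for all `x ∈ X₁`. -/
theorem eta_lambda_identities
    {X₁ X₀ : Type*} (G : PreGroupoid X₁ X₀)
    {T : X₁ → Type*} [∀ x, AddCommGroup (T x)] [∀ x, Module ℝ (T x)]
    (dm : ∀ x y (h : G.t x = G.s y), T x → T y → T (G.m x y h))
    (η : ∀ x y, G.t x = G.s y → T x → T y → ℝ)
    {VF : Type*} (Rvec Lvec : VF → ∀ x, T x)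
    -- η is additive on (compatible) tangent pairs
    (Hadd : ∀ x y h u u' v v',
      η x y h (u + u') (v + v') = η x y h u v + η x y h u' v')
    -- right/left invariance of the invariant vector fields
    (HR : ∀ (V : VF) x y h, dm x y h (Rvec V x) 0 = Rvec V (G.m x y h))
    (HL : ∀ (V : VF) x y h, dm x y h 0 (Lvec V y) = Lvec V (G.m x y h))
    (Hdm0 : ∀ x y h, dm x y h 0 0 = 0)
    -- the simplicial cocycle condition ∂η = 0 on X₃
    (Hcocycle : ∀ a x y (h₁ : G.t a = G.s x) (h₂ : G.t x = G.s y)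
        (h₃ : G.t (G.m a x h₁) = G.s y) (h₄ : G.t a = G.s (G.m x y h₂))
        (α : T a) (ξ : T x) (υ : T y),
        η x y h₂ ξ υ - η (G.m a x h₁) y h₃ (dm a x h₁ α ξ) υ
          + η a (G.m x y h₂) h₄ α (dm x y h₂ ξ υ) - η a x h₁ α ξ = 0) :
    (∀ (V : VF) x y (h : G.t x = G.s y),
        η x y h (Rvec V x) 0
          = lamr G η Rvec V (G.m x y h) - lamr G η Rvec V x) ∧
    (∀ (V : VF) x y (h : G.t x = G.s y),
        η x y h 0 (Lvec V y)
          = laml G η Lvec V (G.m x y h) - laml G η Lvec V y) ∧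
    (∀ (V : VF) u, lamr G η Rvec V (G.e u) = 0 ∧ laml G η Lvec V (G.e u) = 0) ∧
    (∀ (V : VF) x (h : G.t x = G.s (G.inv x)),
        η x (G.inv x) h (Rvec V x) (-(Lvec V (G.inv x)))
          = laml G η Lvec V (G.inv x) - lamr G η Rvec V x) := by
  have hzero x y h := map_zero_zero_of_additive (Hadd x y h)
  exact ⟨eta_rvec_zero_eq_lamr_sub hzero HR Hdm0 Hcocycle,
    eta_zero_lvec_eq_laml_sub hzero HL Hdm0 Hcocycle,
    fun V u => ⟨lamr_e_eq_zero hzero HR Hdm0 Hcocycle V u,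
      laml_e_eq_zero hzero HL Hdm0 Hcocycle V u⟩,
    eta_rvec_neg_lvec_inv Hadd HR HL Hdm0 Hcocycle⟩
end
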